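/- Let G⃗ be a rooted extraction order of a request graph. The confluence edge label assignment of G⃗ is a decomposable edge label assignment: it extends itself trivially, each label node's label-induced subgraph is connected and rooted, each label node lies in its own label-induced subgraph, all in-edges of a node have equal label sets, and no out-edge of a node k is labeled with k. -/

import Mathlib

/-- A directed path in the digraph `A` from `i` to `j`, given as its list of vertices. -/
def DiPath {V : Type*} (A : V → V → Prop) (i j : V) (l : List V) : Prop :=
  List.Chain' A l ∧ l.head? = some i ∧ l.getLast? = some j ∧ l.Nodup ∧ 2 ≤ l.length

/-- A confluence from `i` to `j`: a pair of distinct directed paths from `i` to `j`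
that are node-disjoint except for their shared start and end nodes. -/
def IsConfluence {V : Type*} (A : V → V → Prop) (i j : V) (l₁ l₂ : List V) : Prop :=
  DiPath A i j l₁ ∧ DiPath A i j l₂ ∧ l₁ ≠ l₂ ∧
  ∀ v ∈ l₁, v ∈ l₂ → v = i ∨ v = j

/-- The confluence edge label assignment: the edge `e` is labeled with `j` iff `e`
lies on some confluence ending in `j`. -/
def ConfLabel {V : Type*} (A : V → V → Prop) (e : V × V) (j : V) : Prop :=
  ∃ i l₁ l₂, IsConfluence A i j l₁ l₂ ∧ (e ∈ l₁.zip l₁.tail ∨ e ∈ l₂.zip l₂.tail)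

/-- The confluence label set of an edge. -/
def ConfSet {V : Type*} (A : V → V → Prop) (e : V × V) : Set V :=
  {j | ConfLabel A e j}

/-- The digraph `A` is acyclic. -/
def Acyclic {V : Type*} (A : V → V → Prop) : Prop :=
  ∀ v, ¬ Relation.TransGen A v v

/-- Every node of the digraph `A` is reachable from the root `r`. -/
def RootedAt {V : Type*} (A : V → V → Prop) (r : V) : Prop :=
  ∀ v, Relation.ReflTransGen A r v

/-- The nodes of the label-induced subgraph for the label `k`: endpoints of edges
labeled with `k`. -/
def LabelNodes {V : Type*} (A : V → V → Prop) (L : V × V → Set V) (k : V) : Set V :=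
  {v | ∃ w, (A v w ∧ k ∈ L (v, w)) ∨ (A w v ∧ k ∈ L (w, v))}

/-- A decomposable edge label assignment `L` for the digraph `A`:
it extends the confluence edge labels, every label-induced subgraph is connected and
rooted, every label node lies in its own label-induced subgraph, all in-edges of a
node carry the same label set, and no out-edge of `k` is labeled with `k`. -/
structure DecomposableLabels {V : Type*} (A : V → V → Prop) (L : V × V → Set V) :
    Prop where
  extends_confluence : ∀ (e : V × V) (j : V), ConfLabel A e j → j ∈ L e
  rooted_label_subgraph : ∀ k : V, (∃ v w, A v w ∧ k ∈ L (v, w)) →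
    ∃ ρ ∈ LabelNodes A L k, ∀ v ∈ LabelNodes A L k,
      Relation.ReflTransGen (fun x y => A x y ∧ k ∈ L (x, y)) ρ v
  mem_own_subgraph : ∀ k : V, (∃ v w, A v w ∧ k ∈ L (v, w)) → k ∈ LabelNodes A L k
  in_edges_eq : ∀ i k k' : V, A k i → A k' i → L (k, i) = L (k', i)
  not_self_labeled : ∀ k w : V, A k w → k ∉ L (k, w)

/-!
An edge `(u, v)` carries the label `j` as soon as some walk from the root leaves a walk `W` to `j`
along `(u, v)` and afterwards meets `W` only in `j`: the last node before `(u, v)` at which it was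
still on `W` starts a confluence through `(u, v)`. Rerouting such a witness through another in-edge
of `v` shows that all in-edges of a node carry the same labels.

For the label `k`, let `ρ` be the last node before `k` that dominates `k`. A start `s ≠ ρ` of a
confluence ending in `k` is not a dominator, so some walk to `k` avoids `s`; the walk from `ρ` into
`s` and on along a branch of the confluence leaves it right before `s`, which yields a confluence
ending in `k` that starts strictly between `ρ` and `s` and passes through `s`. Induction on the
distance from `ρ` shows that `ρ` reaches every such `s`, hence every node of the subgraph, along
edges labelled `k`.
-/

section

open List Relation

namespace List

variable {α : Type*} {a b u v y : α} {l L M P : List α}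

theorem mem_zip_tail_iff_infix : (a, b) ∈ l.zip l.tail ↔ [a, b] <:+: l := by
  induction l with
  | nil => simp
  | cons c l ih =>
    cases l with
    | nil => simpa using fun h => by simpa using h.length_le
    | cons d l =>
      rw [infix_cons_iff, ← ih]
      simp [and_comm]

theorem pair_infix_of_append_singleton_eq (h : l ++ [u] = L ++ y :: M) :
    [u, v] <:+: y :: M ++ v :: P := by
  have hlast : (y :: M).getLast? = some u := by
    simpa [getLast?_append] using congrArg getLast? h.symm
  obtain ⟨T, hT⟩ := getLast?_eq_some_iff.1 hlast
  exact ⟨T, P, by simp [hT]⟩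

theorem getLast?_eq_of_pair_infix_append_singleton (hb : b ∉ l) (h : [a, b] <:+: l ++ [b]) :
    l.getLast? = some a := by
  obtain ⟨s, t, hst⟩ := h
  rcases eq_nil_or_concat t with rfl | ⟨t, c, rfl⟩
  · have : s ++ [a] = l := append_inj_left' (by simpa using hst) rfl
    simp [← this]
  · have : s ++ [a, b] ++ t = l :=
      append_inj_left' (t₁ := [c]) (t₂ := [b]) (by simpa using hst) rfl
    exact absurd (this ▸ by simp) hb

theorem exists_eq_append_cons_first {p : α → Prop} :
    ∀ {l : List α}, (∃ a ∈ l, p a) → ∃ L y M, l = L ++ y :: M ∧ p y ∧ ∀ z ∈ L, ¬ p z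
  | [], ⟨_, h, _⟩ => absurd h not_mem_nil
  | a :: l, ⟨b, hb, hpb⟩ => by
    by_cases ha : p a
    · exact ⟨[], a, l, rfl, ha, by simp⟩
    · have hl : ∃ b ∈ l, p b :=
        ⟨b, (mem_cons.1 hb).resolve_left (by rintro rfl; exact ha hpb), hpb⟩
      obtain ⟨L, y, M, rfl, hy, hL⟩ := exists_eq_append_cons_first hl
      exact ⟨a :: L, y, M, rfl, hy, forall_mem_cons.2 ⟨ha, hL⟩⟩

theorem exists_eq_append_cons_last {p : α → Prop} :
    ∀ {l : List α}, (∃ a ∈ l, p a) → ∃ L y M, l = L ++ y :: M ∧ p y ∧ ∀ z ∈ M, ¬ p z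
  | [], ⟨_, h, _⟩ => absurd h not_mem_nil
  | a :: l, ⟨b, hb, hpb⟩ => by
    by_cases hl : ∃ b ∈ l, p b
    · obtain ⟨L, y, M, rfl, hy, hM⟩ := exists_eq_append_cons_last hl
      exact ⟨a :: L, y, M, rfl, hy, hM⟩
    · push Not at hl
      have ha : p a := by
        rcases mem_cons.1 hb with rfl | hb
        exacts [hpb, absurd hpb (hl b hb)]
      exact ⟨[], a, l, rfl, ha, hl⟩

end List

variable {V : Type*} {A : V → V → Prop} {a b c i j k k' r s u v x y z ρ : V}
  {l l₁ l₂ L M W : List V}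

def IsWalk (A : V → V → Prop) (a b : V) (l : List V) : Prop :=
  l.IsChain A ∧ l.head? = some a ∧ l.getLast? = some b

theorem isWalk_append_cons_iff :
    IsWalk A a b (L ++ y :: M) ↔ IsWalk A a y (L ++ [y]) ∧ IsWalk A y b (y :: M) := by
  have hhead : (L ++ y :: M).head? = (L ++ [y]).head? := by cases L <;> rfl
  rw [IsWalk, IsWalk, IsWalk, isChain_split, hhead]
  simp only [getLast?_append, getLast?_cons, head?_cons, getLast?_nil, Option.getD_none, true_and,
    Option.some_or, and_true]
  tauto

theorem Acyclic.nodup (hac : Acyclic A) (h : l.IsChain A) : l.Nodup :=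
  ((h.imp fun _ _ => TransGen.single).pairwise).imp fun hxy => by rintro rfl; exact hac _ hxy

namespace IsWalk

theorem singleton (a : V) : IsWalk A a a [a] := ⟨.singleton a, rfl, rfl⟩

theorem cons (hab : A a b) (h : IsWalk A b c l) : IsWalk A a c (a :: l) := by
  obtain ⟨t, rfl⟩ := head?_eq_some_iff.1 h.2.1
  exact ⟨h.1.cons_cons hab, rfl, by simpa using h.2.2⟩

theorem start_mem (h : IsWalk A a b l) : a ∈ l := mem_of_mem_head? h.2.1

theorem end_mem (h : IsWalk A a b l) : b ∈ l := mem_of_getLast? h.2.2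

theorem append_tail (h₁ : IsWalk A a b l₁) (h₂ : IsWalk A b c l₂) :
    IsWalk A a c (l₁ ++ l₂.tail) := by
  obtain ⟨t, rfl⟩ := head?_eq_some_iff.1 h₂.2.1
  obtain ⟨L, rfl⟩ := getLast?_eq_some_iff.1 h₁.2.2
  simpa using isWalk_append_cons_iff.2 ⟨h₁, h₂⟩

theorem reflTransGen (h : IsWalk A a b l) : ReflTransGen A a b := by
  obtain ⟨t, rfl⟩ := head?_eq_some_iff.1 h.2.1
  exact relationReflTransGen_of_exists_isChain_cons t h.1
    (by simpa [getLast?_eq_some_getLast] using h.2.2)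

theorem reflTransGen_of_mem (h : IsWalk A a b l) (hz : z ∈ l) :
    ReflTransGen A a z ∧ ReflTransGen A z b := by
  obtain ⟨L, M, rfl⟩ := append_of_mem hz
  obtain ⟨h₁, h₂⟩ := isWalk_append_cons_iff.1 h
  exact ⟨h₁.reflTransGen, h₂.reflTransGen⟩

theorem transGen (h : IsWalk A a b l) (hab : a ≠ b) : TransGen A a b :=
  (reflTransGen_iff_eq_or_transGen.1 h.reflTransGen).resolve_left hab.symm

theorem exists_eq_append_pair (h : IsWalk A a b l) (hab : a ≠ b) : ∃ L u, l = L ++ [u, b] := by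
  obtain ⟨L, rfl⟩ := getLast?_eq_some_iff.1 h.2.2
  rcases eq_nil_or_concat L with rfl | ⟨L, u, rfl⟩
  · exact absurd (by simpa using h.2.1 : b = a).symm hab
  · exact ⟨L, u, by simp⟩

theorem diPath (hac : Acyclic A) (h : IsWalk A a b l) (hab : a ≠ b) : DiPath A a b l := by
  obtain ⟨L, u, rfl⟩ := h.exists_eq_append_pair hab
  exact ⟨h.1, h.2.1, h.2.2, hac.nodup h.1, by simp⟩

end IsWalk

theorem exists_isWalk_of_reflTransGen (h : ReflTransGen A a b) : ∃ l, IsWalk A a b l := by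
  obtain ⟨l, hc, hl⟩ := exists_isChain_cons_of_relationReflTransGen h
  exact ⟨a :: l, hc, rfl, by rw [getLast?_eq_some_getLast (cons_ne_nil _ _), hl]⟩

theorem DiPath.isWalk (h : DiPath A a b l) : IsWalk A a b l := ⟨h.1, h.2.1, h.2.2.1⟩

theorem DiPath.ne (h : DiPath A a b l) : a ≠ b := by
  obtain ⟨-, hhead, hlast, hnodup, hlen⟩ := h
  obtain ⟨t, rfl⟩ := head?_eq_some_iff.1 hhead
  rintro rfl
  obtain ⟨c, t, rfl⟩ := exists_cons_of_ne_nil (by rintro rfl; simp at hlen : t ≠ [])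
  rw [getLast?_cons_cons] at hlast
  exact (nodup_cons.1 hnodup).1 (mem_of_getLast? hlast)

theorem IsConfluence.symm (h : IsConfluence A s j l₁ l₂) : IsConfluence A s j l₂ l₁ :=
  ⟨h.2.1, h.1, h.2.2.1.symm, fun v hv₂ hv₁ => h.2.2.2 v hv₁ hv₂⟩

theorem confLabel_iff_exists_infix :
    ConfLabel A (u, v) j ↔ ∃ s l₁ l₂, IsConfluence A s j l₁ l₂ ∧ [u, v] <:+: l₁ := by
  simp only [ConfLabel, mem_zip_tail_iff_infix]
  constructor
  · rintro ⟨s, l₁, l₂, hC, h | h⟩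
    exacts [⟨s, l₁, l₂, hC, h⟩, ⟨s, l₂, l₁, hC.symm, h⟩]
  · rintro ⟨s, l₁, l₂, hC, h⟩
    exact ⟨s, l₁, l₂, hC, Or.inl h⟩

def ConfAdj (A : V → V → Prop) (k x y : V) : Prop :=
  A x y ∧ k ∈ ConfSet A (x, y)

theorem IsConfluence.isWalk_confAdj (hC : IsConfluence A s j l₁ l₂) :
    IsWalk (ConfAdj A j) s j l₁ := by
  refine ⟨isChain_iff_forall_rel_of_append_cons_cons.2 fun a b L M hl => ?_, hC.1.2.1, hC.1.2.2.1⟩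
  exact ⟨isChain_iff_forall_rel_of_append_cons_cons.1 hC.1.1 hl,
    confLabel_iff_exists_infix.2 ⟨s, l₁, l₂, hC, L, M, by simp [hl]⟩⟩

theorem exists_isConfluence_through_edge (hac : Acyclic A) {P₁ P₂ : List V}
    (hW : IsWalk A r j W) (hP : IsWalk A x j (P₁ ++ u :: v :: P₂)) (hx : x ∈ W)
    (hedge : ¬ [u, v] <:+: W) (hmeet : ∀ z ∈ v :: P₂, z ∈ W → z = j) :
    ∃ L y M m, P₁ ++ [u] = L ++ y :: M ∧ IsConfluence A y j (y :: M ++ v :: P₂) m := by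
  have hxP : x ∈ P₁ ++ [u] := (isWalk_append_cons_iff.1 hP).1.start_mem
  obtain ⟨L, y, M, hsplit, hyW, hM⟩ :=
    exists_eq_append_cons_last (p := (· ∈ W)) ⟨x, hxP, hx⟩
  obtain ⟨N, N', rfl⟩ := append_of_mem hyW
  have hPsplit : P₁ ++ u :: v :: P₂ = L ++ y :: (M ++ v :: P₂) := by
    rw [← singleton_append, ← append_assoc, hsplit, append_assoc, cons_append]
  have hB₁ : IsWalk A y j (y :: (M ++ v :: P₂)) := (isWalk_append_cons_iff.1 (hPsplit ▸ hP)).2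
  have hB₂ : IsWalk A y j (y :: N') := (isWalk_append_cons_iff.1 hW).2
  have hvP : IsWalk A v j (v :: P₂) := (isWalk_append_cons_iff (L := y :: M)).1 hB₁ |>.2
  have hyj : y ≠ j := by
    rintro rfl
    exact (nodup_cons.1 (hac.nodup hB₁.1)).1 (mem_append_right M hvP.end_mem)
  refine ⟨L, y, M, y :: N', hsplit, hB₁.diPath hac hyj, hB₂.diPath hac hyj, ?_, ?_⟩
  · intro heq
    have hB : y :: M ++ v :: P₂ <:+: N ++ y :: N' := by rw [heq]; exact infix_append_right
    exact hedge ((pair_infix_of_append_singleton_eq hsplit).trans hB)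
  · intro z hz₁ hz₂
    have hzW : z ∈ N ++ y :: N' := mem_append_right N hz₂
    rcases mem_cons.1 hz₁ with rfl | hz₁
    · exact Or.inl rfl
    rcases mem_append.1 hz₁ with hz₁ | hz₁
    · exact absurd hzW (hM z hz₁)
    · exact Or.inr (hmeet z hz₁ hzW)

theorem confLabel_of_walks (hac : Acyclic A) {Q π : List V} (hQ : IsWalk A r u Q)
    (huv : A u v) (hπ : IsWalk A v j π) (hW : IsWalk A r j W)
    (hmeet : ∀ z ∈ π, z ∈ W → z = j) (hedge : ¬ [u, v] <:+: W) :
    ConfLabel A (u, v) j := by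
  obtain ⟨Q, rfl⟩ := getLast?_eq_some_iff.1 hQ.2.2
  obtain ⟨π, rfl⟩ := head?_eq_some_iff.1 hπ.2.1
  have hP : IsWalk A r j (Q ++ u :: v :: π) := isWalk_append_cons_iff.2 ⟨hQ, hπ.cons huv⟩
  obtain ⟨L, y, M, m, hsplit, hC⟩ :=
    exists_isConfluence_through_edge hac hW hP hW.start_mem hedge hmeet
  exact confLabel_iff_exists_infix.2 ⟨y, _, m, hC, pair_infix_of_append_singleton_eq hsplit⟩

theorem confLabel_of_in_edges_ne (hac : Acyclic A) (hr : RootedAt A r)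
    (hk : A k i) (hk' : A k' i) (hne : k' ≠ k) : ConfLabel A (k', i) i := by
  obtain ⟨Q', hQ'⟩ := exists_isWalk_of_reflTransGen (hr k')
  obtain ⟨Q, hQ⟩ := exists_isWalk_of_reflTransGen (hr k)
  have hW : IsWalk A r i (Q ++ [i]) := hQ.append_tail ((IsWalk.singleton i).cons hk)
  have hiQ : i ∉ Q := fun hi => hac i (TransGen.tail' (hQ.reflTransGen_of_mem hi).2 hk)
  refine confLabel_of_walks hac hQ' hk' (.singleton i) hW (by simp) fun hedge => hne ?_
  exact Option.some_injective _
    ((getLast?_eq_of_pair_infix_append_singleton hiQ hedge).symm.trans hQ.2.2)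

theorem ConfLabel.of_adj (hac : Acyclic A) (hr : RootedAt A r)
    (hk : A k i) (hk' : A k' i) (h : ConfLabel A (k, i) j) : ConfLabel A (k', i) j := by
  by_cases hkk : k' = k
  · exact hkk ▸ h
  by_cases hij : i = j
  · exact hij ▸ confLabel_of_in_edges_ne hac hr hk hk' hkk
  obtain ⟨s, l₁, l₂, hC, L, M, rfl⟩ := confLabel_iff_exists_infix.1 h
  obtain ⟨Q', hQ'⟩ := exists_isWalk_of_reflTransGen (hr k')
  obtain ⟨Q, hQ⟩ := exists_isWalk_of_reflTransGen (hr s)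
  have hl₁ : IsWalk A s j ((L ++ [k]) ++ i :: M) := by simpa using hC.1.isWalk
  have hπ : IsWalk A i j (i :: M) := (isWalk_append_cons_iff.1 hl₁).2
  have hsi : TransGen A s i := .tail' (hl₁.reflTransGen_of_mem (z := k) (by simp)).1 hk
  have hmeet : ∀ z ∈ i :: M, z ∈ Q ++ l₂.tail → z = j := by
    intro z hz hzW
    have hsz : TransGen A s z := hsi.trans_left (hπ.reflTransGen_of_mem hz).1
    rcases mem_append.1 hzW with hzQ | hz₂
    · exact absurd (hsz.trans_left (hQ.reflTransGen_of_mem hzQ).2) (hac s)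
    · rcases hC.2.2.2 z (by simp_all) (mem_of_mem_tail hz₂) with rfl | rfl
      · exact absurd hsz (hac z)
      · rfl
  refine confLabel_of_walks hac hQ' hk' hπ (hQ.append_tail hC.2.1.isWalk) hmeet fun hedge => ?_
  exact hij (hmeet i mem_cons_self (hedge.subset (by simp)))

theorem not_confLabel_self {w : V} : ¬ ConfLabel A (k, w) k := by
  intro h
  obtain ⟨s, l₁, l₂, hC, L, M, rfl⟩ := confLabel_iff_exists_infix.1 h
  obtain ⟨-, -, hlast, hnodup, -⟩ := hC.1
  rw [show L ++ [k, w] ++ M = (L ++ [k]) ++ w :: M by simp] at hlast hnodup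
  rw [getLast?_append_of_ne_nil _ (cons_ne_nil w M)] at hlast
  exact disjoint_of_nodup_append hnodup (by simp) (mem_of_getLast? hlast)

def Dominates (A : V → V → Prop) (r d k : V) : Prop :=
  ∀ l, IsWalk A r k l → d ∈ l

theorem exists_last_strict_dominator (hr : RootedAt A r) (hrk : r ≠ k) :
    ∃ ρ, Dominates A r ρ k ∧ ρ ≠ k ∧ ∀ d, Dominates A r d k → d ≠ k → ReflTransGen A d ρ := by
  obtain ⟨P, hP⟩ := exists_isWalk_of_reflTransGen (hr k)
  obtain ⟨L, ρ, M, rfl, ⟨hρ, hρk⟩, hM⟩ :=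
    exists_eq_append_cons_last (p := fun d => Dominates A r d k ∧ d ≠ k)
      ⟨r, hP.start_mem, fun _ hl => hl.start_mem, hrk⟩
  refine ⟨ρ, hρ, hρk, fun d hd hdk => ?_⟩
  have hdP : d ∈ (L ++ [ρ]) ∨ d ∈ M := by simpa [or_assoc] using hd _ hP
  rcases hdP with hdL | hdM
  · exact ((isWalk_append_cons_iff.1 hP).1.reflTransGen_of_mem hdL).2
  · exact absurd ⟨hd, hdk⟩ (hM d hdM)

theorem Dominates.reflTransGen_of_isConfluence (hr : RootedAt A r) {d : V}
    (hd : Dominates A r d k) (hdk : d ≠ k) (hC : IsConfluence A s k l₁ l₂) :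
    ReflTransGen A d s := by
  obtain ⟨Q, hQ⟩ := exists_isWalk_of_reflTransGen (hr s)
  rcases mem_append.1 (hd _ (hQ.append_tail hC.1.isWalk)) with hdQ | hd₁
  · exact (hQ.reflTransGen_of_mem hdQ).2
  rcases mem_append.1 (hd _ (hQ.append_tail hC.2.1.isWalk)) with hdQ | hd₂
  · exact (hQ.reflTransGen_of_mem hdQ).2
  rcases hC.2.2.2 d (mem_of_mem_tail hd₁) (mem_of_mem_tail hd₂) with rfl | rfl
  exacts [.refl, absurd rfl hdk]

theorem IsConfluence.exists_walk_of_mem_first (hac : Acyclic A) {M₁ M₂ : List V}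
    (hC : IsConfluence A s k l₁ l₂) (hW : IsWalk A r k (M₁ ++ z :: M₂)) (hz : z ∈ l₁)
    (hzs : z ≠ s) (hM₁ : ∀ y ∈ M₁, y ∉ l₂) :
    ∃ W, IsWalk A r k W ∧ ∀ y ∈ l₂, y ∈ W → y = k := by
  obtain ⟨N₁, N₂, rfl⟩ := append_of_mem hz
  have hl₁ := isWalk_append_cons_iff.1 hC.1.isWalk
  refine ⟨M₁ ++ z :: N₂, isWalk_append_cons_iff.2 ⟨(isWalk_append_cons_iff.1 hW).1, hl₁.2⟩,
    fun y hy₂ hyW => ?_⟩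
  rcases mem_append.1 hyW with hyM | hyN
  · exact absurd hy₂ (hM₁ y hyM)
  rcases hC.2.2.2 y (mem_append_right N₁ hyN) hy₂ with rfl | rfl
  · exact (hac _ ((hl₁.1.transGen hzs.symm).trans_left (hl₁.2.reflTransGen_of_mem hyN).1)).elim
  · rfl

theorem IsConfluence.exists_walk_meeting_branch (hac : Acyclic A) (hC : IsConfluence A s k l₁ l₂)
    (hW : IsWalk A r k W) (hsW : s ∉ W) :
    ∃ W' l, IsWalk A r k W' ∧ DiPath A s k l ∧ ∀ y ∈ l, y ∈ W' → y = k := by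
  obtain ⟨M₁, z, M₂, rfl, hz, hM₁⟩ :=
    exists_eq_append_cons_first (p := fun z => z ∈ l₁ ∨ z ∈ l₂)
      ⟨k, hW.end_mem, Or.inl hC.1.isWalk.end_mem⟩
  have hzs : z ≠ s := by rintro rfl; simp at hsW
  rcases hz with hz | hz
  · obtain ⟨W', hW', h⟩ :=
      hC.exists_walk_of_mem_first hac hW hz hzs fun y hy => (not_or.1 (hM₁ y hy)).2
    exact ⟨W', l₂, hW', hC.2.1, h⟩
  · obtain ⟨W', hW', h⟩ :=
      hC.symm.exists_walk_of_mem_first hac hW hz hzs fun y hy => (not_or.1 (hM₁ y hy)).1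
    exact ⟨W', l₁, hW', hC.1, h⟩

theorem exists_isConfluence_closer (hac : Acyclic A) (hρ : Dominates A r ρ k)
    (hmax : ∀ d, Dominates A r d k → d ≠ k → ReflTransGen A d ρ) {R : List V}
    (hR : IsWalk A ρ s R) (hρs : ρ ≠ s) (hC : IsConfluence A s k l₁ l₂) :
    ∃ y R' m₁ m₂, IsWalk A ρ y R' ∧ R'.length < R.length ∧ IsConfluence A y k m₁ m₂ ∧
      s ∈ m₁ := by
  have hsk : s ≠ k := hC.1.ne
  have hs : ¬ Dominates A r s k := fun hs =>
    hac s (.trans_right (hmax s hs hsk) (hR.transGen hρs))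
  obtain ⟨W, hW, hsW⟩ : ∃ W, IsWalk A r k W ∧ s ∉ W := by simpa [Dominates] using hs
  obtain ⟨W', l, hW', hl, hmeet⟩ := hC.exists_walk_meeting_branch hac hW hsW
  obtain ⟨P₁, u, rfl⟩ := hR.exists_eq_append_pair hρs
  obtain ⟨l', rfl⟩ := head?_eq_some_iff.1 hl.2.1
  have hP : IsWalk A ρ k (P₁ ++ u :: s :: l') := by simpa using hR.append_tail hl.isWalk
  have hsW' : s ∉ W' := fun hs => hsk (hmeet s mem_cons_self hs)
  obtain ⟨L, y, M, m, hsplit, hC'⟩ := exists_isConfluence_through_edge hac hW' hP (hρ _ hW')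
    (fun h => hsW' (h.subset (by simp))) hmeet
  have hR' : P₁ ++ [u, s] = L ++ y :: (M ++ [s]) := by
    rw [← singleton_append, ← append_assoc, hsplit]
    simp
  refine ⟨y, L ++ [y], _, m, (isWalk_append_cons_iff.1 (hR' ▸ hR)).1, ?_, hC', by simp⟩
  have := congrArg length hsplit
  simp only [length_append, length_cons, length_nil] at this ⊢
  omega

theorem reflTransGen_confAdj_of_length_le (hac : Acyclic A) (hρ : Dominates A r ρ k)
    (hmax : ∀ d, Dominates A r d k → d ≠ k → ReflTransGen A d ρ) (n : ℕ) :
    ∀ {s R l₁ l₂}, IsWalk A ρ s R → R.length ≤ n → IsConfluence A s k l₁ l₂ →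
      ReflTransGen (ConfAdj A k) ρ s := by
  induction n with
  | zero =>
    intro s R _ _ hR hn _
    obtain ⟨t, rfl⟩ := head?_eq_some_iff.1 hR.2.1
    simp at hn
  | succ n ih =>
    intro s R l₁ l₂ hR hn hC
    by_cases hρs : ρ = s
    · exact hρs ▸ .refl
    obtain ⟨y, R', m₁, m₂, hR', hlen, hC', hs⟩ :=
      exists_isConfluence_closer hac hρ hmax hR hρs hC
    exact (ih hR' (by omega) hC').trans (hC'.isWalk_confAdj.reflTransGen_of_mem hs).1

theorem exists_root_reflTransGen_confAdj (hac : Acyclic A) (hr : RootedAt A r)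
    (hk : ∃ v w, A v w ∧ k ∈ ConfSet A (v, w)) :
    ∃ ρ ∈ LabelNodes A (ConfSet A) k, ∀ v ∈ LabelNodes A (ConfSet A) k,
      ReflTransGen (ConfAdj A k) ρ v := by
  obtain ⟨-, -, -, s₀, l₁, l₂, hC₀, -⟩ := hk
  have hrk : r ≠ k := by
    rintro rfl
    exact hac r (.trans_right (hr s₀) (hC₀.1.isWalk.transGen hC₀.1.ne))
  obtain ⟨ρ, hρ, hρk, hmax⟩ := exists_last_strict_dominator hr hrk
  have hreach : ∀ {s l₁ l₂}, IsConfluence A s k l₁ l₂ → ∀ z ∈ l₁,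
      ReflTransGen (ConfAdj A k) ρ z := by
    intro s l₁ l₂ hC z hz
    obtain ⟨R, hR⟩ := exists_isWalk_of_reflTransGen (hρ.reflTransGen_of_isConfluence hr hρk hC)
    exact (reflTransGen_confAdj_of_length_le hac hρ hmax _ hR le_rfl hC).trans
      (hC.isWalk_confAdj.reflTransGen_of_mem hz).1
  refine ⟨ρ, ?_, ?_⟩
  · obtain ⟨c, hρc, -⟩ := (hreach hC₀ k hC₀.1.isWalk.end_mem).cases_head.resolve_left hρk
    exact ⟨c, Or.inl hρc⟩
  · rintro v ⟨w, ⟨-, hvw⟩ | ⟨-, hwv⟩⟩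
    · obtain ⟨s, l₁, l₂, hC, hinf⟩ := confLabel_iff_exists_infix.1 hvw
      exact hreach hC v (hinf.subset (by simp))
    · obtain ⟨s, l₁, l₂, hC, hinf⟩ := confLabel_iff_exists_infix.1 hwv
      exact hreach hC v (hinf.subset (by simp))

theorem mem_labelNodes_self (hk : ∃ v w, A v w ∧ k ∈ ConfSet A (v, w)) :
    k ∈ LabelNodes A (ConfSet A) k := by
  obtain ⟨-, -, -, s, l₁, l₂, hC, -⟩ := hk
  obtain ⟨c, -, hck⟩ := hC.isWalk_confAdj.reflTransGen.cases_tail.resolve_left hC.1.ne.symm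
  exact ⟨c, Or.inr hck⟩

end

/-- The confluence edge label assignment of a rooted extraction order is a
decomposable edge label assignment. -/
theorem stmt13 {V : Type*} (A : V → V → Prop) (r : V) (hac : Acyclic A)
    (hr : RootedAt A r) :
    DecomposableLabels A (ConfSet A) := by
  exact
    { extends_confluence := fun _ _ h => h
      rooted_label_subgraph := fun _ hk => exists_root_reflTransGen_confAdj hac hr hk
      mem_own_subgraph := fun _ hk => mem_labelNodes_self hk
      in_edges_eq := fun _ _ _ hk hk' =>
        Set.ext fun _ => ⟨ConfLabel.of_adj hac hr hk hk', ConfLabel.of_adj hac hr hk' hk⟩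
      not_self_labeled := fun _ _ _ => not_confLabel_self }
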